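/- arXiv:math/9905216 — 7 statements merged into one kernel-verified Lean document; each statement's English description precedes it below -/
import Mathlib

section
/- Equality w(u + u') = w(u) + w(u') holds if and only if u and u' are co-facial, i.e., w(u)^{-1}u and w(u')^{-1}u' lie on a common closed codimension-1 face of Δ not containing the origin (assuming u, u' are nonzero points of C(Δ)). -/
/-! Subadditivity of `w` is the convexity of `Δ`, and a functional `ℓ ≤ 1` on `Δ` satisfies
`ℓ ≤ w` on `C(Δ)`; so a common supporting functional through both normalized points forces
additivity. Conversely, if equality holds, the normalized point `q` of `u + u'` is
the last point of `Δ` on its ray, and for a polytope containing `0` such a point carries a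
functional `ℓ ≤ 1` on `Δ` with `ℓ q = 1`; then `ℓ u + ℓ u' = w(u) + w(u')` with `ℓ u ≤ w(u)`,
`ℓ u' ≤ w(u')` forces both normalized points onto the face `ℓ = 1`.

The functional is found by induction on the number of vertices. A supporting functional at `q`
that is not constant on `Δ` either is positive at `q`, and is rescaled, or vanishes at `q`; then
`0` and `q` lie on the proper face it cuts out, and the functional of that face is tilted by a
large multiple of it. -/

open scoped Pointwise

/-- The cone `C(Δ)` generated by `Δ`. -/
def cone {n : ℕ} (Δ : Set (Fin n → ℝ)) : Set (Fin n → ℝ) :=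
  {u | ∃ c : ℝ, 0 ≤ c ∧ ∃ x ∈ Δ, u = c • x}

/-- The weight of `u`: the smallest `c ≥ 0` with `u ∈ c • Δ`. -/
noncomputable def weight {n : ℕ} (Δ : Set (Fin n → ℝ)) (u : Fin n → ℝ) : ℝ :=
  sInf {c : ℝ | 0 ≤ c ∧ u ∈ c • Δ}

/-- `u` and `u'` are co-facial: the normalized points `w(u)⁻¹ • u` and `w(u')⁻¹ • u'`
lie on a common closed codimension-1 face of `Δ` not containing the origin, expressed by
a supporting linear functional `ℓ ≤ 1` on `Δ` attaining the value `1` at both points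
(so the face `{x ∈ Δ | ℓ x = 1}` does not contain the origin). -/
def CoFacial {n : ℕ} (Δ : Set (Fin n → ℝ)) (u u' : Fin n → ℝ) : Prop :=
  ∃ ℓ : (Fin n → ℝ) →ₗ[ℝ] ℝ, (∀ x ∈ Δ, ℓ x ≤ 1) ∧
    ℓ ((weight Δ u)⁻¹ • u) = 1 ∧ ℓ ((weight Δ u')⁻¹ • u') = 1

open Topology

section Polytope

variable {E : Type*}

theorem Finset.mem_convexHull_filter_eq_of_le [AddCommGroup E] [Module ℝ E]
    {S : Finset E} {f : E →ₗ[ℝ] ℝ} {a : ℝ} (hf : ∀ s ∈ S, f s ≤ a) {x : E}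
    (hx : x ∈ convexHull ℝ (S : Set E)) (hfx : f x = a) :
    x ∈ convexHull ℝ (S.filter (f · = a) : Set E) := by
  obtain ⟨w, hw0, hw1, rfl⟩ := Finset.mem_convexHull'.mp hx
  have hsum : ∑ s ∈ S, w s * (a - f s) = 0 := by
    simp only [mul_sub, Finset.sum_sub_distrib, ← Finset.sum_mul, hw1, ← hfx, map_sum,
      map_smul, smul_eq_mul]
    ring
  have hsupp : ∀ s ∈ S, w s ≠ 0 → f s = a := fun s hs hws ↦ by
    have := (Finset.sum_eq_zero_iff_of_nonneg fun t ht ↦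
      mul_nonneg (hw0 t ht) (sub_nonneg.mpr (hf t ht))).mp hsum s hs
    linarith [(mul_eq_zero.mp this).resolve_left hws]
  refine Finset.mem_convexHull'.mpr ⟨w, fun s hs ↦ hw0 s (Finset.mem_filter.mp hs).1, ?_, ?_⟩
  · rwa [Finset.sum_filter_of_ne hsupp]
  · exact Finset.sum_filter_of_ne fun s hs hws ↦ hsupp s hs (left_ne_zero_of_smul hws)

theorem Finset.exists_forall_add_mul_le {α : Type*} (S : Finset α) {ℓ f : α → ℝ} {b : ℝ}
    (hf : ∀ s ∈ S, f s ≤ 0) (hℓ : ∀ s ∈ S, f s = 0 → ℓ s ≤ b) :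
    ∃ M : ℝ, ∀ s ∈ S, ℓ s + M * f s ≤ b := by
  obtain ⟨M, hM⟩ := (S.finite_toSet.image fun s ↦ (ℓ s - b) / -f s).bddAbove
  refine ⟨M, fun s hs ↦ ?_⟩
  rcases (hf s hs).lt_or_eq with hneg | hzero
  · have := hM (Set.mem_image_of_mem _ hs)
    rw [div_le_iff₀ (neg_pos.mpr hneg)] at this
    linarith
  · simpa [hzero] using hℓ s hs hzero

theorem exists_one_lt_smul_mem_of_mem_interior [TopologicalSpace E] [AddCommGroup E] [Module ℝ E]
    [ContinuousSMul ℝ E] {C : Set E} {p : E} (hp : p ∈ interior C) :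
    ∃ t : ℝ, 1 < t ∧ t • p ∈ C := by
  have hnear : ∀ᶠ t in 𝓝 (1 : ℝ), t • p ∈ C :=
    ((continuous_id.smul continuous_const).tendsto' (1 : ℝ) p (one_smul ℝ p)).eventually
      (mem_interior_iff_mem_nhds.mp hp)
  obtain ⟨t, htC, ht⟩ :=
    ((eventually_nhdsWithin_of_eventually_nhds hnear).and self_mem_nhdsWithin).exists
      (f := 𝓝[>] (1 : ℝ))
  exact ⟨t, ht, htC⟩

variable [NormedAddCommGroup E] [NormedSpace ℝ E] [FiniteDimensional ℝ E]

theorem Convex.exists_nonconstant_support_of_smul_notMem {C : Set E} (hC : Convex ℝ C)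
    (h0 : (0 : E) ∈ C) {p : E} (hp : p ∈ C) (hmax : ∀ t : ℝ, 1 < t → t • p ∉ C) :
    ∃ f : StrongDual ℝ E, (∀ x ∈ C, f x ≤ f p) ∧ ∃ x ∈ C, f x < f p := by
  -- thickening `C` by a complement of its span makes it full-dimensional without changing
  -- its trace on that span
  set V := Submodule.span ℝ C
  obtain ⟨W, hVW⟩ := V.exists_isCompl
  set C' := C + (W : Set E)
  have hC'conv : Convex ℝ C' := hC.add W.convex
  have hCC' : C ⊆ C' := fun x hx ↦ ⟨x, hx, 0, W.zero_mem, add_zero x⟩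
  have hWC' : (W : Set E) ⊆ C' := fun w hw ↦ ⟨0, h0, w, hw, zero_add w⟩
  have hC'V : ∀ x ∈ C', x ∈ V → x ∈ C := by
    rintro _ ⟨c, hc, w, hw, rfl⟩ hxV
    have hwV : w ∈ V := by simpa using V.sub_mem hxV (Submodule.subset_span hc)
    simpa [Submodule.disjoint_def.mp hVW.disjoint w hwV hw] using hc
  have hint : (interior C').Nonempty := by
    rw [hC'conv.interior_nonempty_iff_affineSpan_eq_top, ← AffineSubspace.coe_eq_univ_iff,
      ← Set.insert_eq_of_mem (hCC' h0), affineSpan_insert_zero, Submodule.coe_eq_univ,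
      eq_top_iff, ← hVW.sup_eq_top]
    exact sup_le (Submodule.span_mono hCC') fun w hw ↦ Submodule.subset_span (hWC' hw)
  have hp_int : p ∉ interior C' := fun hpi ↦ by
    obtain ⟨t, ht, htC'⟩ := exists_one_lt_smul_mem_of_mem_interior hpi
    exact hmax t ht (hC'V _ htC' (V.smul_mem t (Submodule.subset_span hp)))
  obtain ⟨f, hf0, hf⟩ := geometric_hahn_banach_of_nonempty_interior_point hC'conv hp_int hint
  refine ⟨f, fun x hx ↦ hf x (hCC' hx), ?_⟩
  by_contra! hconst
  have hfp : f p = 0 := le_antisymm (by simpa using hconst 0 h0) (by simpa using hf 0 (hCC' h0))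
  have hfC : ∀ x ∈ C, f x = 0 := fun x hx ↦ le_antisymm (hfp ▸ hf x (hCC' hx)) (hfp ▸ hconst x hx)
  have hfW : ∀ w ∈ W, f w = 0 := fun w hw ↦ by
    have h₁ := hf w (hWC' hw)
    have h₂ := hf (-w) (hWC' (W.neg_mem hw))
    rw [map_neg] at h₂
    linarith
  have hker : V ⊔ W ≤ LinearMap.ker (f : E →ₗ[ℝ] ℝ) := sup_le (Submodule.span_le.mpr hfC) hfW
  exact hf0 (ContinuousLinearMap.ext fun x ↦ hker (hVW.sup_eq_top ▸ Submodule.mem_top))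

theorem Finset.exists_linearMap_le_one_eq_one_of_smul_notMem (S : Finset E)
    (h0 : (0 : E) ∈ convexHull ℝ (S : Set E)) {p : E} (hp : p ∈ convexHull ℝ (S : Set E))
    (hmax : ∀ t : ℝ, 1 < t → t • p ∉ convexHull ℝ (S : Set E)) :
    ∃ ℓ : E →ₗ[ℝ] ℝ, (∀ x ∈ convexHull ℝ (S : Set E), ℓ x ≤ 1) ∧ ℓ p = 1 := by
  induction S using Finset.strongInduction with
  | H S ih =>
  obtain ⟨f, hf, x, hx, hfx⟩ :=
    (convex_convexHull ℝ _).exists_nonconstant_support_of_smul_notMem h0 hp hmax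
  have hfp : 0 ≤ f p := by simpa using hf 0 h0
  rcases hfp.lt_or_eq with hpos | hzero
  · refine ⟨(f p)⁻¹ • (f : E →ₗ[ℝ] ℝ), fun y hy ↦ ?_, inv_mul_cancel₀ hpos.ne'⟩
    simpa [inv_mul_le_iff₀ hpos] using hf y hy
  set S' := S.filter (f · = 0)
  have hfS : ∀ s ∈ S, f s ≤ 0 := fun s hs ↦ hzero ▸ hf s (subset_convexHull ℝ _ hs)
  obtain ⟨s₀, hs₀, hfs₀⟩ :=
    ((f : E →ₗ[ℝ] ℝ).concaveOn (convex_convexHull ℝ _)).exists_le_of_mem_convexHull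
      (subset_convexHull ℝ _) hx
  have hS' : S' ⊂ S := Finset.filter_ssubset.mpr ⟨s₀, hs₀, by simp at hfs₀; linarith⟩
  obtain ⟨ℓ, hℓ, hℓp⟩ := ih S' hS'
    (Finset.mem_convexHull_filter_eq_of_le (f := (f : E →ₗ[ℝ] ℝ)) hfS h0 (map_zero f))
    (Finset.mem_convexHull_filter_eq_of_le (f := (f : E →ₗ[ℝ] ℝ)) hfS hp hzero.symm)
    fun t ht htp ↦ hmax t ht (convexHull_mono (Finset.coe_subset.mpr hS'.subset) htp)
  obtain ⟨M, hM⟩ := S.exists_forall_add_mul_le (ℓ := ℓ) hfS fun s hs hfs ↦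
    hℓ s (subset_convexHull ℝ _ (by simp [S', hs, hfs]))
  refine ⟨ℓ + M • (f : E →ₗ[ℝ] ℝ), fun y hy ↦ ?_, by simp [hℓp, ← hzero]⟩
  exact convexHull_min (fun s hs ↦ hM s hs)
    (convex_halfSpace_le (ℓ + M • (f : E →ₗ[ℝ] ℝ)).isLinear 1) hy

end Polytope

section Weight

variable {n : ℕ} {Δ : Set (Fin n → ℝ)} {u : Fin n → ℝ}

theorem mem_cone_of_mem_smul {c : ℝ} (hc : 0 ≤ c) (hu : u ∈ c • Δ) : u ∈ cone Δ := by
  obtain ⟨x, hx, rfl⟩ := hu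
  exact ⟨c, hc, x, hx, rfl⟩

theorem weight_le_of_mem_smul {c : ℝ} (hc : 0 ≤ c) (hu : u ∈ c • Δ) : weight Δ u ≤ c :=
  csInf_le ⟨0, fun _ hc ↦ hc.1⟩ ⟨hc, hu⟩

theorem le_weight_of_forall (hu : u ∈ cone Δ) {m : ℝ} (h : ∀ c, 0 ≤ c → u ∈ c • Δ → m ≤ c) :
    m ≤ weight Δ u := by
  obtain ⟨c, hc, x, hx, rfl⟩ := hu
  exact le_csInf ⟨c, hc, x, hx, rfl⟩ fun d hd ↦ h d hd.1 hd.2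

theorem apply_le_weight {ℓ : (Fin n → ℝ) →ₗ[ℝ] ℝ} (hℓ : ∀ x ∈ Δ, ℓ x ≤ 1) (hu : u ∈ cone Δ) :
    ℓ u ≤ weight Δ u := by
  refine le_weight_of_forall hu fun c hc ⟨x, hx, hxu⟩ ↦ ?_
  rw [← hxu, map_smul, smul_eq_mul]
  exact mul_le_of_le_one_right hc (hℓ x hx)

theorem weight_pos (hΔ : Bornology.IsBounded Δ) (hu : u ∈ cone Δ) (hu0 : u ≠ 0) :
    0 < weight Δ u := by
  obtain ⟨R, hR, hΔR⟩ := hΔ.exists_pos_norm_le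
  refine (div_pos (norm_pos_iff.mpr hu0) hR).trans_le (le_weight_of_forall hu ?_)
  rintro c hc ⟨x, hx, rfl⟩
  rw [div_le_iff₀ hR, norm_smul, Real.norm_of_nonneg hc]
  exact mul_le_mul_of_nonneg_left (hΔR x hx) hc

theorem inv_weight_smul_mem (hΔ : IsClosed Δ) (hu : u ∈ cone Δ) (hw : 0 < weight Δ u) :
    (weight Δ u)⁻¹ • u ∈ Δ := by
  set T := {c : ℝ | 0 ≤ c ∧ u ∈ c • Δ}
  have hT : ∀ c ∈ T, c⁻¹ • u ∈ Δ := by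
    rintro c ⟨hc, x, hx, rfl⟩
    rwa [inv_smul_smul₀ (hw.trans_le (weight_le_of_mem_smul hc ⟨x, hx, rfl⟩)).ne']
  obtain ⟨c, hc, x, hx, rfl⟩ := hu
  have hcl : sInf T ∈ closure T := csInf_mem_closure ⟨c, hc, x, hx, rfl⟩ ⟨0, fun _ hd ↦ hd.1⟩
  exact hΔ.closure_subset_iff.mpr (Set.image_subset_iff.mpr hT)
    (((continuousAt_inv₀ hw.ne').smul continuousAt_const).continuousWithinAt.mem_closure_image hcl)

theorem mem_weight_smul (hΔ : IsClosed Δ) (hu : u ∈ cone Δ) (hw : 0 < weight Δ u) :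
    u ∈ weight Δ u • Δ :=
  ⟨_, inv_weight_smul_mem hΔ hu hw, smul_inv_smul₀ hw.ne' u⟩

theorem smul_inv_weight_smul_notMem (hw : 0 < weight Δ u) {t : ℝ} (ht : 1 < t) :
    t • (weight Δ u)⁻¹ • u ∉ Δ := fun h ↦ by
  have hu : u ∈ (weight Δ u / t) • Δ := by
    refine ⟨_, h, ?_⟩
    change (weight Δ u / t) • t • (weight Δ u)⁻¹ • u = u
    rw [smul_smul, smul_smul, div_mul_cancel₀ _ (by positivity), mul_inv_cancel₀ hw.ne', one_smul]
  have := weight_le_of_mem_smul (by positivity) hu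
  rw [le_div_iff₀ (by positivity)] at this
  nlinarith

theorem apply_inv_weight_smul_eq_one_iff {ℓ : (Fin n → ℝ) →ₗ[ℝ] ℝ} (hw : 0 < weight Δ u) :
    ℓ ((weight Δ u)⁻¹ • u) = 1 ↔ ℓ u = weight Δ u := by
  rw [map_smul, smul_eq_mul, inv_mul_eq_one₀ hw.ne', eq_comm]

end Weight

theorem weight_add_eq_iff_coFacial_general {n : ℕ} (S : Finset (Fin n → ℝ))
    (Δ : Set (Fin n → ℝ)) (hΔ : Δ = convexHull ℝ (S : Set (Fin n → ℝ)))
    (h0 : (0 : Fin n → ℝ) ∈ Δ)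
    (u u' : Fin n → ℝ) (hu : u ∈ cone Δ) (hu' : u' ∈ cone Δ)
    (hu0 : u ≠ 0) (hu'0 : u' ≠ 0) :
    weight Δ (u + u') = weight Δ u + weight Δ u' ↔ CoFacial Δ u u' := by
  have hcpt : IsCompact Δ := hΔ ▸ S.finite_toSet.isCompact_convexHull ℝ
  have hw : 0 < weight Δ u := weight_pos hcpt.isBounded hu hu0
  have hw' : 0 < weight Δ u' := weight_pos hcpt.isBounded hu' hu'0
  have hsum : u + u' ∈ (weight Δ u + weight Δ u') • Δ := by
    rw [(hΔ ▸ convex_convexHull ℝ _ : Convex ℝ Δ).add_smul hw.le hw'.le]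
    exact Set.add_mem_add (mem_weight_smul hcpt.isClosed hu hw)
      (mem_weight_smul hcpt.isClosed hu' hw')
  have hv : u + u' ∈ cone Δ := mem_cone_of_mem_smul (by positivity) hsum
  constructor
  · intro heq
    have hwv : 0 < weight Δ (u + u') := heq ▸ add_pos hw hw'
    obtain ⟨ℓ, hℓ, hℓv⟩ := S.exists_linearMap_le_one_eq_one_of_smul_notMem (hΔ ▸ h0)
      (hΔ ▸ inv_weight_smul_mem hcpt.isClosed hv hwv)
      fun t ht ↦ hΔ ▸ smul_inv_weight_smul_notMem hwv ht
    rw [← hΔ] at hℓ hℓv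
    have h₁ := apply_le_weight hℓ hu
    have h₂ := apply_le_weight hℓ hu'
    rw [apply_inv_weight_smul_eq_one_iff hwv, map_add] at hℓv
    exact ⟨ℓ, hℓ, (apply_inv_weight_smul_eq_one_iff hw).mpr (by linarith),
      (apply_inv_weight_smul_eq_one_iff hw').mpr (by linarith)⟩
  · rintro ⟨ℓ, hℓ, h₁, h₂⟩
    rw [apply_inv_weight_smul_eq_one_iff hw] at h₁
    rw [apply_inv_weight_smul_eq_one_iff hw'] at h₂
    refine (weight_le_of_mem_smul (by positivity) hsum).antisymm ?_
    linarith [apply_le_weight hℓ hv, map_add ℓ u u']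

/-- Equality `w(u + u') = w(u) + w(u')` holds if and only if `u` and `u'` are co-facial. -/
theorem weight_add_eq_iff_coFacial {n : ℕ} (S : Finset (Fin n → ℝ))
    (Δ : Set (Fin n → ℝ)) (hΔ : Δ = convexHull ℝ (S : Set (Fin n → ℝ)))
    (hdim : affineSpan ℝ Δ = ⊤) (h0 : (0 : Fin n → ℝ) ∈ Δ)
    (u u' : Fin n → ℝ) (hu : u ∈ cone Δ) (hu' : u' ∈ cone Δ)
    (hu0 : u ≠ 0) (hu'0 : u' ≠ 0) :
    weight Δ (u + u') = weight Δ u + weight Δ u' ↔ CoFacial Δ u u' :=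
  weight_add_eq_iff_coFacial_general S Δ hΔ h0 u u' hu hu' hu0 hu'0
end

section
/- For 0 ≤ k ≤ p^d − 2 and r = k/(p^d − 1) ∈ [0,1), the p-digit sum satisfies σ_p(k) = (p−1)/(p^d−1) · Σ_{j=0}^{d−1} {p^j r}(p^d − 1), i.e., σ_p(k) = (p−1) · Σ_{j=0}^{d−1} {p^j k/(p^d−1)}. -/
/-! With `N = p^d - 1` and `j < d`, the floor of `p^j k / N` is `⌊k / p^(d-j)⌋`: writing
`k = p^(d-j) h + l`, one has `p^j k = N h + (h + p^j l)` with `h + p^j l < N` as `k < N`.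
Summing the fractional parts, the geometric sum `∑ p^j = N / (p - 1)` turns the main terms
into `k / (p - 1)`, and Legendre's identity `(p - 1) ∑_{i=1}^{d} ⌊k / p^i⌋ = k - σ_p(k)`
finishes. -/

open Finset

theorem Nat.mul_div_mul_sub_one_eq_div {q r k : ℕ} (hk : k < q * r - 1) :
    q * k / (q * r - 1) = k / r := by
  generalize hn : q * r - 1 = n at hk ⊢
  have hqr : q * r = n + 1 := by omega
  have hr : 0 < r := Nat.pos_of_ne_zero (by rintro rfl; simp at hqr)
  have hkr := Nat.div_add_mod k r
  have hl := Nat.mod_lt k hr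
  set h := k / r
  set l := k % r
  have hhq : h < q := Nat.lt_of_mul_lt_mul_left (a := r) (by nlinarith)
  have hqk : q * k = (n + 1) * h + q * l := by rw [← hkr, mul_add, ← mul_assoc, hqr]
  apply Nat.div_eq_of_lt_le
  · nlinarith
  · suffices h + q * l < n by nlinarith
    rcases Nat.lt_or_ge (l + 1) r with hl' | hl'
    · nlinarith
    · have hrl : r = l + 1 := by omega
      rw [hrl] at hqr hkr
      have : h + 1 < q := Nat.lt_of_mul_lt_mul_left (a := l + 1) (by nlinarith)
      nlinarith

theorem Nat.sub_one_mul_sum_range_div_pow_eq_sub_sum_digits {p n d : ℕ} (hp : 1 < p)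
    (hn : n ≤ p ^ d) :
    (p - 1) * ∑ i ∈ range d, n / p ^ (i + 1) = n - (p.digits n).sum := by
  have hvanish : ∀ i ≥ Nat.log p n, n / p ^ (i + 1) = 0 := fun i hi =>
    Nat.div_eq_of_lt <|
      (Nat.lt_pow_succ_log_self hp n).trans_le <| Nat.pow_le_pow_right hp.le (by omega)
  have hlog : Nat.log p n ≤ d := by
    simpa only [Nat.log_pow hp] using Nat.log_mono_right (b := p) hn
  rw [← Nat.sub_one_mul_sum_log_div_pow_eq_sub_sum_digits, eventually_constant_sum hvanish hlog,
    eventually_constant_sum hvanish (Nat.le_succ _)]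

theorem fract_pow_mul_div_pow_sub_one {p d j k : ℕ} (hj : j < d) (hk : k < p ^ d - 1) :
    Int.fract ((p : ℚ) ^ j * k / ((p : ℚ) ^ d - 1)) =
      (p : ℚ) ^ j * k / ((p : ℚ) ^ d - 1) - (k / p ^ (d - j) : ℕ) := by
  have hpow : p ^ j * p ^ (d - j) = p ^ d := by rw [← pow_add, Nat.add_sub_cancel' hj.le]
  have hcast : (p : ℚ) ^ j * k / ((p : ℚ) ^ d - 1) =
      ((p ^ j * k : ℕ) : ℚ) / ((p ^ d - 1 : ℕ) : ℚ) := by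
    rw [Nat.cast_mul, Nat.cast_sub (by omega), Nat.cast_pow, Nat.cast_pow, Nat.cast_one]
  rw [Int.fract, hcast, Rat.floor_natCast_div_natCast, ← Int.natCast_div, ← hpow,
    Nat.mul_div_mul_sub_one_eq_div (hpow ▸ hk), Int.cast_natCast]

/-- For `0 ≤ k ≤ p^d − 2`, the `p`-digit sum satisfies
`σ_p(k) = (p−1) · ∑_{j=0}^{d−1} {pʲ k/(p^d−1)}`, where `{x}` is the fractional part. -/
theorem digit_sum_eq_sum_fract (p : ℕ) (hp : p.Prime) (d : ℕ) (hd : 1 ≤ d)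
    (k : ℕ) (hk : k ≤ p ^ d - 2) :
    ((Nat.digits p k).sum : ℚ) =
      ((p : ℚ) - 1) * ∑ j ∈ Finset.range d, Int.fract ((p : ℚ) ^ j * k / ((p : ℚ) ^ d - 1)) := by
  have hpd : 2 ≤ p ^ d := Nat.one_lt_pow (by omega) hp.one_lt
  have hN : (p : ℚ) ^ d - 1 ≠ 0 := by
    rw [sub_ne_zero]; exact_mod_cast (by omega : p ^ d ≠ 1)
  have hlegendre := congrArg (Nat.cast : ℕ → ℚ)
    (Nat.sub_one_mul_sum_range_div_pow_eq_sub_sum_digits hp.one_lt (n := k) (d := d) (by omega))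
  simp only [Nat.cast_mul, Nat.cast_sub hp.one_le, Nat.cast_sub (Nat.digit_sum_le p k),
    Nat.cast_sum, Nat.cast_one] at hlegendre
  have hreflect : ∑ j ∈ range d, ((k / p ^ (d - j) : ℕ) : ℚ) =
      ∑ i ∈ range d, ((k / p ^ (i + 1) : ℕ) : ℚ) := by
    rw [← sum_range_reflect]
    refine sum_congr rfl fun j hj => ?_
    rw [mem_range] at hj
    rw [show d - (d - 1 - j) = j + 1 by omega]
  rw [sum_congr rfl fun j hj => fract_pow_mul_div_pow_sub_one (mem_range.1 hj) (by omega),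
    sum_sub_distrib, ← sum_div, ← sum_mul, hreflect]
  have hgeom := geom_sum_mul (p : ℚ) d
  field_simp
  linear_combination ((p : ℚ) ^ d - 1) * hlegendre - (k : ℚ) * hgeom
end

section
/- For the 2-variable diagonal Laurent polynomial with exponent matrix M = ((d, 0), (1−d, 1)) (columns V_1 = (d, 1−d), V_2 = (0,1)), the denominator D(Δ) equals 1 while the largest invariant factor d_2 of M equals d; in particular D(Δ) can be a proper divisor of d_n for n ≥ 2. -/
lemma dvd_mul_mul_entry (x : ℤ) (A B C : Matrix (Fin 2) (Fin 2) ℤ)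
    (h : ∀ i j, x ∣ A i j) : ∀ i j, x ∣ (B * A * C) i j := by
  intro i j
  simp only [Matrix.mul_apply]
  refine Finset.dvd_sum fun k _ => ?_
  refine Dvd.dvd.mul_right ?_ _
  refine Finset.dvd_sum fun l _ => ?_
  exact Dvd.dvd.mul_left (h l k) _

/-- For the 2-variable diagonal Laurent polynomial with exponent matrix having columns
`V₁ = (d, 1−d)` and `V₂ = (0, 1)`, the denominator `D(Δ)` equals `1` while the largest
invariant factor `d₂` of `M` equals `d`: so `D(Δ)` can be a proper factor of `dₙ`. -/
theorem example_denominator_one_invariant_factor_d (d : ℤ) (hd : 2 ≤ d)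
    (M : Matrix (Fin 2) (Fin 2) ℤ) (hM : M = !![d, 0; 1 - d, 1])
    (e : Fin 2 → ℚ) (he : ∀ j, ∑ i, e i * (M i j : ℚ) = 1) :
    (Finset.univ.lcm fun i => (e i).den) = 1 ∧
      ∀ (P Q : Matrix (Fin 2) (Fin 2) ℤ) (d₁ d₂ : ℤ),
        IsUnit P.det → IsUnit Q.det → P * M * Q = Matrix.diagonal ![d₁, d₂] → d₁ ∣ d₂ →
          d₂.natAbs = d.natAbs := by
  subst hM
  have hd0 : (d : ℚ) ≠ 0 := by
    have : (0:ℤ) < d := by omega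
    exact_mod_cast this.ne'
  have h1 := he 1
  have h0 := he 0
  simp [Fin.sum_univ_two, Matrix.cons_val_zero, Matrix.cons_val_one] at h1 h0
  -- h1 : e 1 = 1
  have he1 : e 1 = 1 := h1
  have he0 : e 0 = 1 := by
    rw [he1] at h0
    have : e 0 * d = d := by linarith
    field_simp at this
    tauto
  constructor
  · have : ∀ i : Fin 2, (e i).den = 1 := by
      intro i
      fin_cases i <;> simp [he0, he1]
    simp only [this]
    decide
  · intro P Q d₁ d₂ hP hQ hPMQ hdvd
    set A : Matrix (Fin 2) (Fin 2) ℤ := !![d, 0; 1 - d, 1] with hA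
    have hDdvd : ∀ i j, d₁ ∣ (Matrix.diagonal ![d₁, d₂]) i j := by
      intro i j
      by_cases h : i = j
      · subst h
        fin_cases i
        · simp
        · simpa using hdvd
      · simp [Matrix.diagonal_apply_ne _ h]
    have hMeq : A = P⁻¹ * (Matrix.diagonal ![d₁, d₂]) * Q⁻¹ := by
      rw [← hPMQ]
      have : P⁻¹ * (P * A * Q) * Q⁻¹ = (P⁻¹ * P) * A * (Q * Q⁻¹) := by noncomm_ring
      rw [this, Matrix.nonsing_inv_mul _ hP, Matrix.mul_nonsing_inv _ hQ, one_mul, mul_one]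
    have hd1 : d₁ ∣ 1 := by
      have := dvd_mul_mul_entry d₁ (Matrix.diagonal ![d₁, d₂]) P⁻¹ Q⁻¹ hDdvd 1 1
      rw [← hMeq] at this
      simpa [hA] using this
    have hdet : P.det * A.det * Q.det = d₁ * d₂ := by
      rw [← Matrix.det_mul, ← Matrix.det_mul, hPMQ, Matrix.det_diagonal,
        Fin.prod_univ_two]
      simp
    have hAdet : A.det = d := by
      simp [hA, Matrix.det_fin_two_of]
    have hd1' : d₁.natAbs = 1 := Nat.dvd_one.mp (Int.natAbs_dvd_natAbs.mpr hd1)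
    have hPn : P.det.natAbs = 1 := Int.isUnit_iff.mp hP |>.elim (fun h => by simp [h]) (fun h => by simp [h])
    have hQn : Q.det.natAbs = 1 := Int.isUnit_iff.mp hQ |>.elim (fun h => by simp [h]) (fun h => by simp [h])
    have := congrArg Int.natAbs hdet
    simp only [Int.natAbs_mul, hPn, hQn, hAdet, hd1', one_mul, mul_one] at this
    exact this.symm
end

section
/- For an indecomposable n-dimensional integral simplex Δ with n ≤ 3 (i.e., the unique codimension-1 face δ not containing the origin has no lattice points other than its vertices), the denominator D(Δ) equals the largest invariant factor d_n of the vertex matrix M, and |det M| = D(Δ). -/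
/-!
Write `V₀, …, Vₙ` for the columns of `M` and pick `z` with `e ⬝ z = 1` (Bézout). The determinant
of `[x, V₁ - V₀, …, Vₙ - V₀]` is a linear form in `x` vanishing on `e⊥`, so `det M = D · det B`
for `B = [z, V₁ - V₀, …, Vₙ - V₀]`. If `T = |det B| > 1`, then `B` is not onto the lattice, and
Cramer's rule reduces a lattice point outside its image to a lattice point `y` with
`T y = ∑ rⱼ (Vⱼ - V₀)`, `0 ≤ rⱼ < T`, not all zero. Then `V₀ + y` or, for a triangle, its
reflection `V₁ + V₂ - V₀ - y` is a lattice point of `δ` other than a vertex. Hence `|det M| = D`.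
For the Smith form, `dᵢ ∣ dₙ` gives `dₙ ℤⁿ⁺¹ ⊆ M ℤⁿ⁺¹`, and applying `e` to `dₙ z = M c` shows
`D ∣ dₙ`; conversely `dₙ ∣ det M`.
-/

open Matrix

def edgeMatrix {R : Type*} [Ring R] {n : ℕ} (M : Matrix (Fin (n + 1)) (Fin (n + 1)) R)
    (x : Fin (n + 1) → R) : Matrix (Fin (n + 1)) (Fin (n + 1)) R :=
  Matrix.of fun i j => if j = 0 then x i else M i j - M i 0

section EdgeMatrix

variable {R : Type*} [CommRing R] {n : ℕ} (M : Matrix (Fin (n + 1)) (Fin (n + 1)) R)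

theorem det_edgeMatrix_col_zero : (edgeMatrix M (M.col 0)).det = M.det := by
  rw [← det_transpose, ← det_transpose M]
  refine (det_eq_of_forall_row_eq_smul_add_const (fun j => if j = 0 then 0 else 1) 0
    (by simp) fun j i => ?_).symm
  by_cases hj : j = 0 <;> simp [edgeMatrix, hj]

theorem edgeMatrix_mulVec (x r : Fin (n + 1) → R) (hr : r 0 = 0) :
    edgeMatrix M x *ᵥ r = M *ᵥ r - (∑ j, r j) • M.col 0 := by
  ext i
  simp only [mulVec, dotProduct, edgeMatrix, of_apply, Fin.sum_univ_succ, hr, Fin.succ_ne_zero,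
    if_true, if_false, mul_zero, zero_add, Pi.sub_apply, Pi.smul_apply, smul_eq_mul, col_apply,
    Finset.sum_mul, ← Finset.sum_sub_distrib]
  exact Finset.sum_congr rfl fun _ _ => by ring

variable {M}

theorem vecMul_edgeMatrix {e : Fin (n + 1) → R} {D : R} (hplane : e ᵥ* M = fun _ => D)
    (x : Fin (n + 1) → R) : e ᵥ* edgeMatrix M x = Pi.single 0 (e ⬝ᵥ x) := by
  ext j
  have hj := congrFun hplane j
  have h0 := congrFun hplane 0
  simp only [vecMul, dotProduct] at hj h0
  by_cases hj0 : j = 0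
  · subst hj0; simp [vecMul, dotProduct, edgeMatrix]
  · simp [vecMul, dotProduct, edgeMatrix, hj0, mul_sub, hj, h0]

theorem det_edgeMatrix_eq [IsDomain R] {e z : Fin (n + 1) → R} {D : R}
    (hplane : e ᵥ* M = fun _ => D) (hz : e ⬝ᵥ z = 1) (x : Fin (n + 1) → R) :
    (edgeMatrix M x).det = (e ⬝ᵥ x) * (edgeMatrix M z).det := by
  have hcol : ∀ y, (edgeMatrix M y).det = cramer (edgeMatrix M 0) y 0 := fun y => by
    rw [cramer_apply]; congr 1; ext i j; by_cases hj : j = 0 <;> simp [edgeMatrix, hj]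
  have hker : (edgeMatrix M (x - (e ⬝ᵥ x) • z)).det = 0 := by
    refine exists_vecMul_eq_zero_iff.mp ⟨e, fun he => by simp [he] at hz, ?_⟩
    rw [vecMul_edgeMatrix hplane, dotProduct_sub, dotProduct_smul, hz]
    simp
  rw [hcol, hcol] at *
  simpa [map_sub, sub_eq_zero] using hker

theorem det_eq_mul_det_edgeMatrix [IsDomain R] {e z : Fin (n + 1) → R} {D : R}
    (hplane : e ᵥ* M = fun _ => D) (hz : e ⬝ᵥ z = 1) :
    M.det = D * (edgeMatrix M z).det := by
  rw [← det_edgeMatrix_col_zero, det_edgeMatrix_eq hplane hz]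
  exact congrArg (· * _) (congrFun hplane 0)

end EdgeMatrix

def IsEmptyColumnSimplex {m k : Type*} (M : Matrix m k ℤ) : Prop :=
  ∀ u : m → ℤ, (fun i => (u i : ℝ)) ∈ convexHull ℝ (Set.range fun j => fun i => (M i j : ℝ)) →
    ∃ j, u = fun i => M i j

namespace IsEmptyColumnSimplex

theorem eq_single_of_mulVec_eq_smul {ι : Type*} [Fintype ι] [DecidableEq ι]
    {M : Matrix ι ι ℤ} (hface : IsEmptyColumnSimplex M) (hM : M.det ≠ 0) {T : ℤ} (hT : 0 < T)
    {s q : ι → ℤ} (hs : 0 ≤ s) (hsum : ∑ j, s j = T) (hq : M *ᵥ s = T • q) :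
    ∃ k, s = Pi.single k T := by
  have hT' : (0 : ℝ) < T := by exact_mod_cast hT
  have hmem : (fun i => (q i : ℝ)) ∈
      convexHull ℝ (Set.range fun j => fun i => (M i j : ℝ)) := by
    have hcomb : (fun i => (q i : ℝ)) = ∑ j, ((s j : ℝ) / T) • fun i => (M i j : ℝ) := by
      ext i
      have hi : ∑ j, (M i j : ℝ) * s j = T * q i := by exact_mod_cast congrFun hq i
      simp only [Finset.sum_apply, Pi.smul_apply, smul_eq_mul]
      calc (q i : ℝ) = (∑ j, (M i j : ℝ) * s j) / T := by rw [hi]; field_simp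
        _ = _ := by rw [Finset.sum_div]; exact Finset.sum_congr rfl fun _ _ => by ring
    rw [hcomb]
    refine (convex_convexHull ℝ _).sum_mem (fun j _ => div_nonneg (by exact_mod_cast hs j) hT'.le)
      ?_ fun j _ => subset_convexHull ℝ _ (Set.mem_range_self j)
    rw [← Finset.sum_div, div_eq_one_iff_eq hT'.ne']
    exact_mod_cast hsum
  obtain ⟨k, hk⟩ := hface q hmem
  refine ⟨k, ?_⟩
  by_contra hne
  refine hM (exists_mulVec_eq_zero_iff.mp ⟨s - Pi.single k T, sub_ne_zero.mpr hne, ?_⟩)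
  rw [mulVec_sub, hq, mulVec_single, hk]
  ext i
  simp [mul_comm]

variable {n : ℕ} {M : Matrix (Fin (n + 1)) (Fin (n + 1)) ℤ} {e z : Fin (n + 1) → ℤ} {D : ℤ}

theorem coord_eq_zero_of_lt (hface : IsEmptyColumnSimplex M) (hM : M.det ≠ 0) (hn : n ≤ 2)
    {T : ℤ} (hT : 0 < T) {s q : Fin (n + 1) → ℤ} (hsum : ∑ j, s j = T)
    (hs : ∀ j ≠ 0, 0 ≤ s j ∧ s j < T) (hq : M *ᵥ s = T • q) : ∀ j ≠ 0, s j = 0 := by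
  rcases le_or_gt 0 (s 0) with hs0 | hs0
  · have hnonneg : 0 ≤ s := fun j => if hj : j = 0 then hj ▸ hs0 else (hs j hj).1
    obtain ⟨k, rfl⟩ := hface.eq_single_of_mulVec_eq_smul hM hT hnonneg hsum hq
    intro j hj
    by_cases hk : j = k
    · subst hk; simpa using (hs j hj).2
    · simp [hk]
  obtain rfl : n = 2 := by
    interval_cases n
    · rw [Fin.sum_univ_one] at hsum; linarith
    · rw [Fin.sum_univ_two] at hsum; linarith [(hs 1 one_ne_zero).2]
    · rfl
  -- `q` lies beyond the edge `V₁V₂` of the triangle, so its reflection `V₁ + V₂ - q` lies inside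
  exfalso
  have h1 := hs 1 one_ne_zero
  have h2 := hs 2 (by decide)
  have hq' : M *ᵥ (Pi.single 1 T + Pi.single 2 T - s) = T • (M.col 1 + M.col 2 - q) := by
    rw [mulVec_sub, mulVec_add, hq, mulVec_single, mulVec_single]
    ext i
    simp only [Pi.add_apply, Pi.sub_apply, Pi.smul_apply, smul_eq_mul, col_apply,
      MulOpposite.smul_eq_mul_unop, MulOpposite.unop_op]
    ring
  obtain ⟨k, hk⟩ := hface.eq_single_of_mulVec_eq_smul hM hT
    (fun j => by fin_cases j <;> simp <;> linarith)
    (by simp only [Pi.sub_apply, Pi.add_apply, Finset.sum_sub_distrib, Finset.sum_add_distrib,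
      Finset.sum_pi_single', Finset.mem_univ, if_true, hsum]; ring) hq'
  have hk0 := congrFun hk 0
  have hk1 := congrFun hk 1
  fin_cases k <;> simp at hk0 hk1 <;> linarith

theorem isUnit_det_edgeMatrix (hface : IsEmptyColumnSimplex M) (hM : M.det ≠ 0) (hn : n ≤ 2)
    (hplane : e ᵥ* M = fun _ => D) (hz : e ⬝ᵥ z = 1) : IsUnit (edgeMatrix M z).det := by
  set B := edgeMatrix M z
  have hB : B.det ≠ 0 := right_ne_zero_of_mul (det_eq_mul_det_edgeMatrix hplane hz ▸ hM)
  rw [← isUnit_iff_isUnit_det, ← mulVec_surjective_iff_isUnit]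
  intro y
  set T := |B.det|
  have hT : 0 < T := abs_pos.mpr hB
  set c := B.det.sign • cramer B y
  have hc : B *ᵥ c = T • y := by
    rw [mulVec_smul, mulVec_cramer, smul_smul, Int.sign_mul_self_eq_abs]
  set q : Fin (n + 1) → ℤ := fun j => c j / T
  set r : Fin (n + 1) → ℤ := fun j => c j % T
  have hr_bound (j) : 0 ≤ r j ∧ r j < T := ⟨Int.emod_nonneg _ hT.ne', Int.emod_lt_of_pos _ hT⟩
  have hr : B *ᵥ r = T • (y - B *ᵥ q) := by
    have hcr : c = T • q + r := funext fun j => (Int.mul_ediv_add_emod (c j) T).symm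
    rw [hcr, mulVec_add, mulVec_smul] at hc
    rw [smul_sub, ← hc]; abel
  have hr0 : r 0 = 0 := by
    have h := congrArg (e ⬝ᵥ ·) hr
    simp only [dotProduct_mulVec, vecMul_edgeMatrix hplane, hz, single_dotProduct, one_mul,
      dotProduct_smul, smul_eq_mul, B] at h
    exact Int.eq_zero_of_dvd_of_nonneg_of_lt (hr_bound 0).1 (hr_bound 0).2 ⟨_, h⟩
  set s := r + Pi.single 0 (T - ∑ j, r j)
  have hs : ∀ j ≠ 0, s j = r j := fun j hj => by simp [s, hj]
  have hsum : ∑ j, s j = T := by simp [s, Finset.sum_add_distrib]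
  have hMs : M *ᵥ s = T • (y - B *ᵥ q + M.col 0) := by
    rw [mulVec_add, mulVec_single, smul_add, ← hr, edgeMatrix_mulVec M z r hr0]
    ext i
    simp only [Pi.add_apply, Pi.sub_apply, Pi.smul_apply, smul_eq_mul, col_apply,
      MulOpposite.smul_eq_mul_unop, MulOpposite.unop_op]
    ring
  have hr_zero : r = 0 := funext fun j => if hj : j = 0 then hj ▸ hr0 else
    hs j hj ▸ hface.coord_eq_zero_of_lt hM hn hT hsum (fun j hj => hs j hj ▸ hr_bound j) hMs j hj
  refine ⟨q, ?_⟩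
  rw [hr_zero, mulVec_zero, eq_comm, smul_eq_zero_iff_right hT.ne', sub_eq_zero] at hr
  exact hr.symm

theorem natAbs_det_eq (hface : IsEmptyColumnSimplex M) (hM : M.det ≠ 0) (hn : n ≤ 2)
    (hplane : e ᵥ* M = fun _ => D) (hz : e ⬝ᵥ z = 1) : M.det.natAbs = D.natAbs := by
  rw [det_eq_mul_det_edgeMatrix hplane hz, Int.natAbs_mul,
    Int.isUnit_iff_natAbs_eq.mp (hface.isUnit_det_edgeMatrix hM hn hplane hz), mul_one]

end IsEmptyColumnSimplex

section Smith

variable {R ι : Type*} [CommRing R] [Fintype ι] [DecidableEq ι] {P M Q : Matrix ι ι R} {d : ι → R}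

theorem dvd_det_of_mul_mul_eq_diagonal (hP : IsUnit P.det) (hQ : IsUnit Q.det)
    (hSmith : P * M * Q = diagonal d) (k : ι) : d k ∣ M.det := by
  have hprod : P.det * M.det * Q.det = ∏ i, d i := by
    rw [← det_mul, ← det_mul, hSmith, det_diagonal]
  have hk : d k ∣ P.det * M.det * Q.det := hprod ▸ Finset.dvd_prod_of_mem d (Finset.mem_univ k)
  rwa [hQ.dvd_mul_right, mul_comm, hP.dvd_mul_right] at hk

theorem exists_mulVec_eq_smul_of_mul_mul_eq_diagonal (hP : IsUnit P.det)
    (hSmith : P * M * Q = diagonal d) {k : ι} (hk : ∀ i, d i ∣ d k) (x : ι → R) :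
    ∃ c, M *ᵥ c = d k • x := by
  choose m hm using hk
  refine ⟨Q *ᵥ fun i => m i * (P *ᵥ x) i, ?_⟩
  have h : P *ᵥ (M *ᵥ Q *ᵥ fun i => m i * (P *ᵥ x) i) = P *ᵥ (d k • x) := by
    rw [mulVec_mulVec, mulVec_mulVec, hSmith, mulVec_smul]
    ext i
    simp only [mulVec_diagonal, hm i, Pi.smul_apply, smul_eq_mul]
    ring
  simpa only [mulVec_mulVec, ← Matrix.mul_assoc, nonsing_inv_mul P hP, Matrix.one_mul, one_mulVec]
    using congrArg (P⁻¹ *ᵥ ·) h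

end Smith

theorem dvd_of_mulVec_eq_smul {R ι : Type*} [CommRing R] [Fintype ι] {M : Matrix ι ι R}
    {e z c : ι → R} {D a : R} (hplane : e ᵥ* M = fun _ => D) (hz : e ⬝ᵥ z = 1)
    (hc : M *ᵥ c = a • z) : D ∣ a := by
  have h := congrArg (e ⬝ᵥ ·) hc
  simp only [dotProduct_mulVec, hplane, dotProduct_smul, hz, smul_eq_mul, mul_one] at h
  exact ⟨∑ i, c i, by rw [← h]; simp [dotProduct, Finset.mul_sum]⟩

theorem indecomposable_simplex_low_dim_general {n : ℕ} (h3 : n + 1 ≤ 3)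
    (M : Matrix (Fin (n + 1)) (Fin (n + 1)) ℤ) (hM : M.det ≠ 0)
    (e : Fin (n + 1) → ℤ) (D : ℤ)
    (hgcd : Finset.univ.gcd e = 1)
    (hplane : ∀ j, ∑ i, e i * M i j = D)
    (hface : ∀ u : Fin (n + 1) → ℤ,
      (fun i => (u i : ℝ)) ∈
          convexHull ℝ (Set.range fun j => fun i => (M i j : ℝ)) →
        ∃ j, u = fun i => M i j)
    (P Q : Matrix (Fin (n + 1)) (Fin (n + 1)) ℤ)
    (hP : IsUnit P.det) (hQ : IsUnit Q.det)
    (d : Fin (n + 1) → ℤ) (hSmith : P * M * Q = Matrix.diagonal d)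
    (hdvd : ∀ i j : Fin (n + 1), i ≤ j → d i ∣ d j) :
    (d (Fin.last n)).natAbs = D.natAbs ∧ M.det.natAbs = D.natAbs := by
  obtain ⟨z, hz⟩ : ∃ z, e ⬝ᵥ z = 1 := by
    obtain ⟨z, hz⟩ := Finset.univ.gcd_eq_sum_mul e
    exact ⟨z, by rw [dotProduct, ← hz, hgcd]⟩
  have hplane' : e ᵥ* M = fun _ => D := funext hplane
  have hdet : M.det.natAbs = D.natAbs :=
    IsEmptyColumnSimplex.natAbs_det_eq hface hM (by omega) hplane' hz
  obtain ⟨c, hc⟩ := exists_mulVec_eq_smul_of_mul_mul_eq_diagonal hP hSmith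
    (fun i => hdvd i _ (Fin.le_last i)) z
  refine ⟨Nat.dvd_antisymm ?_ ?_, hdet⟩
  · exact hdet ▸ Int.natAbs_dvd_natAbs.mpr (dvd_det_of_mul_mul_eq_diagonal hP hQ hSmith _)
  · exact Int.natAbs_dvd_natAbs.mpr (dvd_of_mulVec_eq_smul hplane' hz hc)

/-- For an indecomposable `n`-dimensional integral simplex `Δ` with `n ≤ 3` (the unique
codimension-1 face `δ` not containing the origin has no lattice points other than the
vertices, and lies on the hyperplane `e₁X₁ + ⋯ + eₙXₙ = D` with coprime integers `eᵢ`),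
the denominator `D(Δ) = D` equals the largest invariant factor `dₙ` of the vertex matrix
`M`, and `|det M| = D(Δ)`. -/
theorem indecomposable_simplex_low_dim {n : ℕ} (h3 : n + 1 ≤ 3)
    (M : Matrix (Fin (n + 1)) (Fin (n + 1)) ℤ) (hM : M.det ≠ 0)
    (e : Fin (n + 1) → ℤ) (D : ℤ) (hD : 1 ≤ D)
    (hgcd : Finset.univ.gcd e = 1)
    (hplane : ∀ j, ∑ i, e i * M i j = D)
    (hface : ∀ u : Fin (n + 1) → ℤ,
      (fun i => (u i : ℝ)) ∈
          convexHull ℝ (Set.range fun j => fun i => (M i j : ℝ)) →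
        ∃ j, u = fun i => M i j)
    (P Q : Matrix (Fin (n + 1)) (Fin (n + 1)) ℤ)
    (hP : IsUnit P.det) (hQ : IsUnit Q.det)
    (d : Fin (n + 1) → ℤ) (hSmith : P * M * Q = Matrix.diagonal d)
    (hdvd : ∀ i j : Fin (n + 1), i ≤ j → d i ∣ d j) :
    (d (Fin.last n)).natAbs = D.natAbs ∧ M.det.natAbs = D.natAbs :=
  indecomposable_simplex_low_dim_general h3 M hM e D hgcd hplane hface P Q hP hQ d hSmith hdvd
end

section
/- For the 5-dimensional simplex Δ generated by the origin and the columns of the matrix M with rows (1,1,1,1,1), (0,0,1,1,1), (0,1,0,1,1), (0,1,1,0,1), (0,1,1,1,0): if p ≡ 2 (mod 3), then the multiplication-by-p action swaps the two nonzero elements (2/3,1/3,1/3,1/3,1/3) and (1/3,2/3,2/3,2/3,2/3) of S(Δ), and hence the weight function on S(Δ) (weights 2 and 3 respectively) is not stable under the p-action. -/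
open Matrix

section FloorRing

variable {K : Type*} [Field K] [LinearOrder K] [IsStrictOrderedRing K] [FloorRing K]

theorem fract_natCast_mul_inv_three {p : ℕ} (hp : p % 3 = 2) :
    Int.fract ((p : K) * 3⁻¹) = 2 / 3 := by
  obtain ⟨k, rfl⟩ : ∃ k : ℕ, p = 3 * k + 2 := ⟨p / 3, by omega⟩
  rw [show ((3 * k + 2 : ℕ) : K) * 3⁻¹ = (k : ℤ) + 2 / 3 by push_cast; ring,
    Int.fract_intCast_add, Int.fract_eq_self.2 ⟨by positivity, by norm_num⟩]

theorem fract_natCast_mul_two_thirds {p : ℕ} (hp : p % 3 = 2) :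
    Int.fract ((p : K) * (2 / 3)) = 1 / 3 := by
  obtain ⟨k, rfl⟩ : ∃ k : ℕ, p = 3 * k + 2 := ⟨p / 3, by omega⟩
  rw [show ((3 * k + 2 : ℕ) : K) * (2 / 3) = (2 * k + 1 : ℤ) + 1 / 3 by push_cast; ring,
    Int.fract_intCast_add, Int.fract_eq_self.2 ⟨by positivity, by norm_num⟩]

end FloorRing

theorem exists_intCast_sum_eq_of_mulVec_eq {m n : Type*} [Fintype n]
    {M : Matrix m n ℤ} {r : n → ℚ} {z : m → ℤ} (h : M.map Int.cast *ᵥ r = fun i => (z i : ℚ))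
    (i : m) : ∃ w : ℤ, ∑ j, (M i j : ℚ) * r j = w :=
  ⟨z i, congrFun h i⟩

theorem five_dim_counterexample_p_action_general (p : ℕ) (hp3 : p % 3 = 2)
    (M : Matrix (Fin 5) (Fin 5) ℤ)
    (hM : M = !![1,1,1,1,1; 0,0,1,1,1; 0,1,0,1,1; 0,1,1,0,1; 0,1,1,1,0])
    (S : Set (Fin 5 → ℚ))
    (hS : S = {r | (∀ i, 0 ≤ r i ∧ r i < 1) ∧ ∀ i, ∃ z : ℤ, ∑ j, (M i j : ℚ) * r j = z})
    (r₁ r₂ : Fin 5 → ℚ)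
    (hr₁ : r₁ = ![2/3, 1/3, 1/3, 1/3, 1/3]) (hr₂ : r₂ = ![1/3, 2/3, 2/3, 2/3, 2/3]) :
    r₁ ∈ S ∧ r₂ ∈ S ∧
      (fun i => Int.fract ((p : ℚ) * r₁ i)) = r₂ ∧
      (fun i => Int.fract ((p : ℚ) * r₂ i)) = r₁ ∧
      ∑ i, r₁ i = 2 ∧ ∑ i, r₂ i = 3 ∧
      ∑ i, Int.fract ((p : ℚ) * r₁ i) ≠ ∑ i, r₁ i := by
  subst hS
  have hMr₁ : M.map Int.cast *ᵥ r₁ = fun i => ((![2, 1, 1, 1, 1] : Fin 5 → ℤ) i : ℚ) := by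
    subst hM hr₁
    ext i; fin_cases i <;> simp [mulVec, dotProduct, Fin.sum_univ_five] <;> norm_num
  have hMr₂ : M.map Int.cast *ᵥ r₂ = fun i => ((![3, 2, 2, 2, 2] : Fin 5 → ℤ) i : ℚ) := by
    subst hM hr₂
    ext i; fin_cases i <;> simp [mulVec, dotProduct, Fin.sum_univ_five] <;> norm_num
  have swap₁₂ : (fun i => Int.fract ((p : ℚ) * r₁ i)) = r₂ := by
    subst hr₁ hr₂
    ext i
    fin_cases i <;> simp [fract_natCast_mul_inv_three hp3, fract_natCast_mul_two_thirds hp3]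
  have swap₂₁ : (fun i => Int.fract ((p : ℚ) * r₂ i)) = r₁ := by
    subst hr₁ hr₂
    ext i
    fin_cases i <;> simp [fract_natCast_mul_inv_three hp3, fract_natCast_mul_two_thirds hp3]
  have weight₁ : ∑ i, r₁ i = 2 := by subst hr₁; simp [Fin.sum_univ_five]; norm_num
  have weight₂ : ∑ i, r₂ i = 3 := by subst hr₂; simp [Fin.sum_univ_five]; norm_num
  refine ⟨⟨fun i => by subst hr₁; fin_cases i <;> norm_num,
      exists_intCast_sum_eq_of_mulVec_eq hMr₁⟩,
    ⟨fun i => by subst hr₂; fin_cases i <;> norm_num, exists_intCast_sum_eq_of_mulVec_eq hMr₂⟩,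
    swap₁₂, swap₂₁, weight₁, weight₂, ?_⟩
  rw [congrArg (fun f => ∑ i, f i) swap₁₂, weight₁, weight₂]
  norm_num

/-- For the 5-dimensional counter-example: if `p ≡ 2 (mod 3)`, the multiplication-by-`p`
action swaps the two nonzero elements `(2/3,1/3,1/3,1/3,1/3)` and `(1/3,2/3,2/3,2/3,2/3)`
of `S(Δ)`, and hence the weight function on `S(Δ)` (weights `2` and `3`) is not stable
under the `p`-action. -/
theorem five_dim_counterexample_p_action (p : ℕ) (hp : p.Prime) (hp3 : p % 3 = 2)
    (M : Matrix (Fin 5) (Fin 5) ℤ)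
    (hM : M = !![1,1,1,1,1; 0,0,1,1,1; 0,1,0,1,1; 0,1,1,0,1; 0,1,1,1,0])
    (S : Set (Fin 5 → ℚ))
    (hS : S = {r | (∀ i, 0 ≤ r i ∧ r i < 1) ∧ ∀ i, ∃ z : ℤ, ∑ j, (M i j : ℚ) * r j = z})
    (r₁ r₂ : Fin 5 → ℚ)
    (hr₁ : r₁ = ![2/3, 1/3, 1/3, 1/3, 1/3]) (hr₂ : r₂ = ![1/3, 2/3, 2/3, 2/3, 2/3]) :
    r₁ ∈ S ∧ r₂ ∈ S ∧
      (fun i => Int.fract ((p : ℚ) * r₁ i)) = r₂ ∧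
      (fun i => Int.fract ((p : ℚ) * r₂ i)) = r₁ ∧
      ∑ i, r₁ i = 2 ∧ ∑ i, r₂ i = 3 ∧
      ∑ i, Int.fract ((p : ℚ) * r₁ i) ≠ ∑ i, r₁ i :=
  five_dim_counterexample_p_action_general p hp3 M hM S hS r₁ r₂ hr₁ hr₂
end

section
/- Let D ≥ 2, k ≥ 2 be integers and let M be the 4×4 matrix with rows (D,D,D,D), (0,1,1,0), (0,0,1,−1), (0,0,0,D^k). Then det M = D^{k+1}, the denominator D(Δ) = D, the largest invariant factor is D^k, and the lattice points in the fundamental domain of the column lattice are exactly the points (j_1/D^k)V_1 + {(D^k − j_4)/D^k}V_2 + (j_4/D^k)V_3 + (j_4/D^k)V_4 with 0 ≤ j_1, j_4 ≤ D^k − 1 and j_1 + j_4 ≡ 0 (mod D^{k−1}); there are exactly D^{k+1} such points. -/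
/-!
The row vector `e` with `e M = (1, 1, 1, 1)` is forced to be `(1/D, 0, 0, 0)`. The matrix `M` has
an integral scaled inverse `A` with `M A = A M = D ^ k • 1`, so `M B = c • 1` is solvable over `ℤ`
exactly when `D ^ k ∣ c`; a diagonal form `P M Q = diag d` makes it solvable exactly when every
`d i` divides `c`, hence the largest invariant factor is `D ^ k`. The lattice points `r` are found
row by row: the last two rows force `r₂ = r₃ = j₄ / D ^ k`, the second fixes `r₁` as a fractional
part, and the first two together say that `D (r₀ + r₃)` is an integer, i.e. `r₀ = j₁ / D ^ k`
with `D ^ (k - 1) ∣ j₁ + j₄`. For each `j₄` exactly `D` values of `j₁` qualify.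
-/

open Matrix Finset

namespace Matrix

variable {n R : Type*} [Fintype n] [DecidableEq n] [CommRing R]

theorem exists_mul_eq_smul_one_iff_forall_dvd {M P Q : Matrix n n R} {d : n → R}
    (hP : IsUnit P.det) (hQ : IsUnit Q.det) (h : P * M * Q = diagonal d) (c : R) :
    (∃ B, M * B = c • 1) ↔ ∀ i, d i ∣ c := by
  constructor
  · rintro ⟨B, hB⟩ i
    have hX : diagonal d * (Q⁻¹ * B * P⁻¹) = c • 1 := by
      rw [← h, show P * M * Q * (Q⁻¹ * B * P⁻¹) = P * (M * (Q * Q⁻¹) * B) * P⁻¹ by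
          simp only [Matrix.mul_assoc],
        mul_nonsing_inv _ hQ, Matrix.mul_one, hB, Matrix.mul_smul, Matrix.mul_one,
        Matrix.smul_mul, mul_nonsing_inv _ hP]
    refine ⟨(Q⁻¹ * B * P⁻¹) i i, ?_⟩
    simpa using (congrFun (congrFun hX i) i).symm
  · intro hd
    choose f hf using hd
    have hM : M = P⁻¹ * diagonal d * Q⁻¹ := by
      rw [← h, show P⁻¹ * (P * M * Q) * Q⁻¹ = (P⁻¹ * P) * M * (Q * Q⁻¹) by
          simp only [Matrix.mul_assoc],
        nonsing_inv_mul _ hP, mul_nonsing_inv _ hQ, Matrix.one_mul, Matrix.mul_one]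
    have hdf : diagonal d * diagonal f = c • 1 := by
      rw [diagonal_mul_diagonal, smul_one_eq_diagonal]
      exact congrArg diagonal (funext fun i => (hf i).symm)
    refine ⟨Q * diagonal f * P, ?_⟩
    rw [hM, show P⁻¹ * diagonal d * Q⁻¹ * (Q * diagonal f * P)
        = P⁻¹ * (diagonal d * (Q⁻¹ * Q) * diagonal f) * P by simp only [Matrix.mul_assoc],
      nonsing_inv_mul _ hQ, Matrix.mul_one, hdf, Matrix.mul_smul, Matrix.mul_one,
      Matrix.smul_mul, nonsing_inv_mul _ hP]

end Matrix

theorem exists_nat_lt_eq_div_of_mul_eq_intCast {K : Type*} [Field K] [LinearOrder K]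
    [IsStrictOrderedRing K] {N : ℕ} (hN : N ≠ 0) {x : K} (hx : 0 ≤ x ∧ x < 1) {z : ℤ}
    (hz : N * x = z) : ∃ j : ℕ, j < N ∧ x = j / N := by
  have hN' : (0 : K) < N := by positivity
  have hz0 : 0 ≤ z := by
    have : (0 : K) ≤ z := hz ▸ mul_nonneg hN'.le hx.1
    exact_mod_cast this
  lift z to ℕ using hz0
  rw [Int.cast_natCast] at hz
  refine ⟨z, ?_, by rw [eq_div_iff hN'.ne', mul_comm, hz]⟩
  have : (z : K) < N := by rw [← hz]; nlinarith [hx.2]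
  exact_mod_cast this

theorem Nat.card_filter_dvd_add_range_mul {n : ℕ} (hn : n ≠ 0) (D a : ℕ) :
    #{j ∈ range (n * D) | n ∣ j + a} = D := by
  have hmodEq : ∀ j, n ∣ j + a ↔ j ≡ (n - 1) * a [MOD n] := fun j => by
    rw [Nat.modEq_iff_dvd, ← Int.natCast_dvd_natCast,
      show (((n - 1) * a : ℕ) : ℤ) - j = n * a - (j + a : ℕ) by
        push_cast [Nat.cast_sub (Nat.one_le_iff_ne_zero.2 hn)]; ring,
      dvd_sub_right (dvd_mul_right _ _)]
  simp_rw [hmodEq, ← Nat.count_eq_card_filter_range, Nat.count_modEq_card _ (Nat.pos_of_ne_zero hn),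
    Nat.mul_mod_right, Nat.mul_div_cancel_left _ (Nat.pos_of_ne_zero hn)]
  simp

theorem Nat.card_filter_dvd_add_range_mul_product {n : ℕ} (hn : n ≠ 0) (D : ℕ) :
    #{p ∈ range (n * D) ×ˢ range (n * D) | n ∣ p.1 + p.2} = n * D * D := by
  rw [card_filter, sum_product_right]
  simp_rw [← card_filter, Nat.card_filter_dvd_add_range_mul hn, sum_const, card_range, smul_eq_mul]

def counterexampleMatrix (D k : ℕ) : Matrix (Fin 4) (Fin 4) ℤ :=
  !![(D : ℤ), D, D, D; 0, 1, 1, 0; 0, 0, 1, -1; 0, 0, 0, (D : ℤ) ^ k]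

def counterexampleMatrixScaledInv (D k : ℕ) : Matrix (Fin 4) (Fin 4) ℤ :=
  !![(D : ℤ) ^ (k - 1), -(D : ℤ) ^ k, 0, -1; 0, (D : ℤ) ^ k, -(D : ℤ) ^ k, -1;
    0, 0, (D : ℤ) ^ k, 1; 0, 0, 0, 1]

def fundamentalDomainPoint (D k j₁ j₄ : ℕ) : Fin 4 → ℚ :=
  ![(j₁ : ℚ) / (D : ℚ) ^ k, Int.fract (((D : ℚ) ^ k - (j₄ : ℚ)) / (D : ℚ) ^ k),
    (j₄ : ℚ) / (D : ℚ) ^ k, (j₄ : ℚ) / (D : ℚ) ^ k]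

def fundamentalDomainPoints (D k : ℕ) : Set (Fin 4 → ℚ) :=
  {r | ∃ j₁ j₄ : ℕ, j₁ ≤ D ^ k - 1 ∧ j₄ ≤ D ^ k - 1 ∧ D ^ (k - 1) ∣ j₁ + j₄ ∧
    r = fundamentalDomainPoint D k j₁ j₄}

section

variable {D k : ℕ}

theorem det_counterexampleMatrix : (counterexampleMatrix D k).det = (D : ℤ) ^ (k + 1) := by
  have hupper : (counterexampleMatrix D k).IsUpperTriangular := fun i j hji => by
    fin_cases i <;> fin_cases j <;> simp_all [counterexampleMatrix]
  rw [det_of_isUpperTriangular hupper, Fin.prod_univ_four, pow_succ']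
  simp [counterexampleMatrix]

theorem counterexampleMatrix_mul_scaledInv (hk : k ≠ 0) :
    counterexampleMatrix D k * counterexampleMatrixScaledInv D k = (D : ℤ) ^ k • 1 := by
  ext i j
  fin_cases i <;> fin_cases j <;>
    simp [counterexampleMatrix, counterexampleMatrixScaledInv, mul_apply, Fin.sum_univ_four,
      mul_pow_sub_one hk]

theorem scaledInv_mul_counterexampleMatrix (hk : k ≠ 0) :
    counterexampleMatrixScaledInv D k * counterexampleMatrix D k = (D : ℤ) ^ k • 1 := by
  ext i j
  fin_cases i <;> fin_cases j <;>
    simp [counterexampleMatrix, counterexampleMatrixScaledInv, mul_apply, Fin.sum_univ_four,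
      pow_sub_one_mul hk]

theorem exists_counterexampleMatrix_mul_eq_smul_one_iff (hk : k ≠ 0) (c : ℤ) :
    (∃ B, counterexampleMatrix D k * B = c • 1) ↔ (D : ℤ) ^ k ∣ c := by
  constructor
  · rintro ⟨B, hB⟩
    have h := congrArg (counterexampleMatrixScaledInv D k * ·) hB
    simp only [← Matrix.mul_assoc, scaledInv_mul_counterexampleMatrix hk, Matrix.smul_mul,
      Matrix.one_mul, Matrix.mul_smul, Matrix.mul_one] at h
    exact ⟨B 3 3, by simpa [counterexampleMatrixScaledInv] using (congrFun (congrFun h 3) 3).symm⟩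
  · rintro ⟨t, rfl⟩
    refine ⟨t • counterexampleMatrixScaledInv D k, ?_⟩
    rw [Matrix.mul_smul, counterexampleMatrix_mul_scaledInv hk, smul_smul, mul_comm]

theorem natAbs_invariantFactor_counterexampleMatrix (hk : k ≠ 0)
    {P Q : Matrix (Fin 4) (Fin 4) ℤ} {d : Fin 4 → ℤ} (hP : IsUnit P.det) (hQ : IsUnit Q.det)
    (h : P * counterexampleMatrix D k * Q = diagonal d) (hd : ∀ i, d i ∣ d 3) :
    (d 3).natAbs = D ^ k := by
  have hiff := exists_mul_eq_smul_one_iff_forall_dvd hP hQ h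
  have h₁ : d 3 ∣ (D : ℤ) ^ k :=
    (hiff _).1 ((exists_counterexampleMatrix_mul_eq_smul_one_iff hk _).2 dvd_rfl) 3
  have h₂ : (D : ℤ) ^ k ∣ d 3 :=
    (exists_counterexampleMatrix_mul_eq_smul_one_iff hk _).1 ((hiff _).2 hd)
  simpa using Int.natAbs_eq_of_dvd_dvd h₁ h₂

theorem forall_exists_sum_counterexampleMatrix_mul_eq_intCast_iff (r : Fin 4 → ℚ) :
    (∀ i, ∃ z : ℤ, ∑ j, (counterexampleMatrix D k i j : ℚ) * r j = z) ↔
      (∃ z : ℤ, D * (r 0 + r 1 + r 2 + r 3) = z) ∧ (∃ z : ℤ, r 1 + r 2 = z) ∧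
        (∃ z : ℤ, r 2 - r 3 = z) ∧ ∃ z : ℤ, D ^ k * r 3 = z := by
  simp [Fin.forall_fin_succ, counterexampleMatrix, Fin.sum_univ_four, mul_add, sub_eq_add_neg]

theorem exists_eq_fundamentalDomainPoint (hD : D ≠ 0) (hk : k ≠ 0) {r : Fin 4 → ℚ}
    (hr : ∀ i, 0 ≤ r i ∧ r i < 1)
    (hz : ∀ i, ∃ z : ℤ, ∑ j, (counterexampleMatrix D k i j : ℚ) * r j = z) :
    ∃ j₁ j₄ : ℕ, j₁ < D ^ k ∧ j₄ < D ^ k ∧ D ^ (k - 1) ∣ j₁ + j₄ ∧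
      r = fundamentalDomainPoint D k j₁ j₄ := by
  obtain ⟨⟨z₀, h₀⟩, ⟨z₁, h₁⟩, ⟨z₂, h₂⟩, ⟨z₃, h₃⟩⟩ :=
    (forall_exists_sum_counterexampleMatrix_mul_eq_intCast_iff r).1 hz
  have hDk : D ^ k ≠ 0 := pow_ne_zero _ hD
  have hDk' : (D : ℚ) ^ k ≠ 0 := by exact_mod_cast hDk
  have hsplit : (D : ℚ) ^ k = (D : ℚ) ^ (k - 1) * D := (pow_sub_one_mul hk _).symm
  have hr₂₃ : r 2 = r 3 := by
    rw [← Int.fract_eq_self.2 (hr 2), ← Int.fract_eq_self.2 (hr 3)]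
    exact Int.fract_eq_fract.2 ⟨z₂, h₂⟩
  obtain ⟨j₄, hj₄, hr₃⟩ := exists_nat_lt_eq_div_of_mul_eq_intCast hDk (hr 3)
    (z := z₃) (by push_cast; exact h₃)
  push_cast at hr₃
  -- `D ^ k r₀ = D ^ (k - 1) (D (r₀ + r₁ + r₂ + r₃) - D (r₁ + r₂)) - D ^ k r₃`
  obtain ⟨j₁, hj₁, hr₀⟩ := exists_nat_lt_eq_div_of_mul_eq_intCast hDk (hr 0)
    (z := D ^ (k - 1) * (z₀ - D * z₁) - j₄) (by
      push_cast
      rw [← h₀, ← h₁, hr₂₃, hsplit, hr₃, hsplit]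
      field_simp
      ring)
  push_cast at hr₀
  refine ⟨j₁, j₄, hj₁, hj₄, ?_, ?_⟩
  · have : ((j₁ + j₄ : ℕ) : ℤ) = (D ^ (k - 1) : ℕ) * (z₀ - D * z₁) := by
      have : ((j₁ + j₄ : ℕ) : ℚ) = (D ^ (k - 1) : ℕ) * (z₀ - D * z₁) := by
        push_cast
        rw [← h₀, ← h₁, hr₂₃, hr₀, hr₃, hsplit]
        field_simp
        ring
      exact_mod_cast this
    exact Int.natCast_dvd_natCast.1 ⟨_, this⟩
  · ext i
    fin_cases i
    · exact hr₀
    · show r 1 = Int.fract (((D : ℚ) ^ k - j₄) / (D : ℚ) ^ k)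
      rw [← Int.fract_eq_self.2 (hr 1)]
      refine Int.fract_eq_fract.2 ⟨z₁ - 1, ?_⟩
      rw [sub_div, div_self hDk', ← hr₃, ← hr₂₃]
      push_cast
      linarith
    · exact hr₂₃.trans hr₃
    · exact hr₃

theorem fundamentalDomainPoint_apply_mem_Ico {j₁ j₄ : ℕ} (hj₁ : j₁ < D ^ k) (hj₄ : j₄ < D ^ k)
    (i : Fin 4) : fundamentalDomainPoint D k j₁ j₄ i ∈ Set.Ico 0 1 := by
  have hDk : (0 : ℚ) < D ^ k := by exact_mod_cast (Nat.zero_le j₁).trans_lt hj₁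
  have hj₁' : (j₁ : ℚ) < D ^ k := by exact_mod_cast hj₁
  have hj₄' : (j₄ : ℚ) < D ^ k := by exact_mod_cast hj₄
  fin_cases i
  · exact ⟨div_nonneg (Nat.cast_nonneg _) hDk.le, (div_lt_one hDk).2 hj₁'⟩
  · exact ⟨Int.fract_nonneg _, Int.fract_lt_one _⟩
  · exact ⟨div_nonneg (Nat.cast_nonneg _) hDk.le, (div_lt_one hDk).2 hj₄'⟩
  · exact ⟨div_nonneg (Nat.cast_nonneg _) hDk.le, (div_lt_one hDk).2 hj₄'⟩

theorem sum_counterexampleMatrix_mul_fundamentalDomainPoint_mem_range (hD : D ≠ 0) (hk : k ≠ 0)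
    {j₁ j₄ : ℕ} (hdvd : D ^ (k - 1) ∣ j₁ + j₄) (i : Fin 4) :
    ∃ z : ℤ, ∑ j, (counterexampleMatrix D k i j : ℚ) * fundamentalDomainPoint D k j₁ j₄ j = z := by
  revert i
  rw [forall_exists_sum_counterexampleMatrix_mul_eq_intCast_iff]
  obtain ⟨m, hm⟩ := hdvd
  have hDk : (D : ℚ) ^ k ≠ 0 := by positivity
  have hsplit : (D : ℚ) ^ k = (D : ℚ) ^ (k - 1) * D := (pow_sub_one_mul hk _).symm
  have hm' : (j₁ : ℚ) + j₄ = (D : ℚ) ^ (k - 1) * m := by exact_mod_cast hm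
  set b := ⌊((D : ℚ) ^ k - j₄) / (D : ℚ) ^ k⌋
  have hfract : Int.fract (((D : ℚ) ^ k - j₄) / (D : ℚ) ^ k) =
      ((D : ℚ) ^ k - j₄) / (D : ℚ) ^ k - b := (Int.self_sub_floor _).symm
  simp only [fundamentalDomainPoint, Matrix.cons_val_zero, Matrix.cons_val_one, Matrix.cons_val_two,
    Matrix.cons_val_three, Matrix.head_cons, Matrix.tail_cons, hfract]
  refine ⟨⟨m + D - D * b, ?_⟩, ⟨1 - b, ?_⟩, ⟨0, ?_⟩, ⟨j₄, ?_⟩⟩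
  · push_cast
    field_simp
    rw [hsplit]
    linear_combination (D : ℚ) * hm'
  · push_cast
    field_simp
    ring
  · simp
  · push_cast
    field_simp

theorem eq_of_forall_sum_mul_counterexampleMatrix_eq_one (hD : D ≠ 0) {e : Fin 4 → ℚ}
    (he : ∀ j, ∑ i, e i * (counterexampleMatrix D k i j : ℚ) = 1) :
    e = ![(D : ℚ)⁻¹, 0, 0, 0] := by
  have h₀ : e 0 * D = 1 := by simpa [counterexampleMatrix, Fin.sum_univ_four] using he 0
  have h₁ : e 0 * D + e 1 = 1 := by simpa [counterexampleMatrix, Fin.sum_univ_four] using he 1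
  have h₂ : e 0 * D + e 1 + e 2 = 1 := by
    simpa [counterexampleMatrix, Fin.sum_univ_four] using he 2
  have h₃ : e 0 * D - e 2 + e 3 * D ^ k = 1 := by
    simpa [counterexampleMatrix, Fin.sum_univ_four, sub_eq_add_neg] using he 3
  have e₁ : e 1 = 0 := by linarith
  have e₂ : e 2 = 0 := by linarith
  have e₃ : e 3 = 0 := by
    have : e 3 * D ^ k = 0 := by linarith
    simpa [hD] using this
  ext i
  fin_cases i
  · exact eq_inv_of_mul_eq_one_left h₀
  · exact e₁
  · exact e₂
  · exact e₃

theorem lcm_den_of_forall_sum_mul_counterexampleMatrix_eq_one (hD : D ≠ 0) {e : Fin 4 → ℚ}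
    (he : ∀ j, ∑ i, e i * (counterexampleMatrix D k i j : ℚ) = 1) :
    (Finset.univ.lcm fun i => (e i).den) = D := by
  rw [eq_of_forall_sum_mul_counterexampleMatrix_eq_one hD he]
  simp [Fin.univ_succ, Finset.lcm_insert, hD]

theorem setOf_mem_fundamentalDomain_counterexampleMatrix (hD : D ≠ 0) (hk : k ≠ 0) :
    {r : Fin 4 → ℚ | (∀ i, 0 ≤ r i ∧ r i < 1) ∧
      ∀ i, ∃ z : ℤ, ∑ j, (counterexampleMatrix D k i j : ℚ) * r j = z} =
      fundamentalDomainPoints D k := by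
  have hDk : 0 < D ^ k := by positivity
  ext r
  simp only [fundamentalDomainPoints, Set.mem_ofPred_eq, Nat.le_sub_one_iff_lt hDk]
  constructor
  · rintro ⟨hr, hz⟩
    exact exists_eq_fundamentalDomainPoint hD hk hr hz
  · rintro ⟨j₁, j₄, hj₁, hj₄, hdvd, rfl⟩
    exact ⟨fundamentalDomainPoint_apply_mem_Ico hj₁ hj₄,
      sum_counterexampleMatrix_mul_fundamentalDomainPoint_mem_range hD hk hdvd⟩

theorem fundamentalDomainPoint_injective (hD : D ≠ 0) :
    Function.Injective fun p : ℕ × ℕ => fundamentalDomainPoint D k p.1 p.2 := by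
  intro p q h
  have hDk : (D : ℚ) ^ k ≠ 0 := by positivity
  have h₀ : (p.1 : ℚ) / D ^ k = q.1 / D ^ k := congrFun h 0
  have h₂ : (p.2 : ℚ) / D ^ k = q.2 / D ^ k := congrFun h 2
  rw [div_left_inj' hDk] at h₀ h₂
  exact Prod.ext (by exact_mod_cast h₀) (by exact_mod_cast h₂)

theorem card_fundamentalDomainPoints (hD : D ≠ 0) (hk : k ≠ 0) :
    Nat.card (fundamentalDomainPoints D k) = D ^ (k + 1) := by
  have hDk : 0 < D ^ k := by positivity
  have hsplit : D ^ k = D ^ (k - 1) * D := (pow_sub_one_mul hk _).symm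
  have himage : fundamentalDomainPoints D k =
      (fun p : ℕ × ℕ => fundamentalDomainPoint D k p.1 p.2) ''
        ↑({p ∈ range (D ^ k) ×ˢ range (D ^ k) | D ^ (k - 1) ∣ p.1 + p.2}) := by
    ext r
    simp [fundamentalDomainPoints, Nat.le_sub_one_iff_lt hDk, eq_comm (a := r), and_assoc]
  rw [himage, Nat.card_image_of_injective (fundamentalDomainPoint_injective hD),
    Nat.card_coe_set_eq, Set.ncard_coe_finset, hsplit,
    Nat.card_filter_dvd_add_range_mul_product (pow_ne_zero _ hD), ← hsplit, ← pow_succ]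

end

/-- For `D ≥ 2`, `k ≥ 2` and the 4×4 matrix `M` with rows `(D,D,D,D)`, `(0,1,1,0)`,
`(0,0,1,−1)`, `(0,0,0,D^k)`: `det M = D^(k+1)`, the denominator `D(Δ)` equals `D`, the
largest invariant factor is `D^k`, and the lattice points of the fundamental domain
correspond exactly to the barycentric coefficient vectors
`(j₁/D^k, {(D^k − j₄)/D^k}, j₄/D^k, j₄/D^k)` with `0 ≤ j₁, j₄ ≤ D^k − 1` and
`j₁ + j₄ ≡ 0 (mod D^(k−1))`; there are exactly `D^(k+1)` of them. -/
theorem four_dim_counterexample_structure (D k : ℕ) (hD : 2 ≤ D) (hk : 2 ≤ k)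
    (M : Matrix (Fin 4) (Fin 4) ℤ)
    (hM : M = !![(D : ℤ), D, D, D; 0, 1, 1, 0; 0, 0, 1, -1; 0, 0, 0, (D : ℤ) ^ k])
    (e : Fin 4 → ℚ) (he : ∀ j, ∑ i, e i * (M i j : ℚ) = 1)
    (S : Set (Fin 4 → ℚ))
    (hS : S = {r | (∀ i, 0 ≤ r i ∧ r i < 1) ∧ ∀ i, ∃ z : ℤ, ∑ j, (M i j : ℚ) * r j = z}) :
    M.det = (D : ℤ) ^ (k + 1) ∧
      (Finset.univ.lcm fun i => (e i).den) = D ∧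
      (∀ (P Q : Matrix (Fin 4) (Fin 4) ℤ) (d : Fin 4 → ℤ),
        IsUnit P.det → IsUnit Q.det → P * M * Q = Matrix.diagonal d →
          (∀ i j : Fin 4, i ≤ j → d i ∣ d j) → (d 3).natAbs = D ^ k) ∧
      S = {r | ∃ j₁ j₄ : ℕ, j₁ ≤ D ^ k - 1 ∧ j₄ ≤ D ^ k - 1 ∧
            D ^ (k - 1) ∣ (j₁ + j₄) ∧
            r = ![(j₁ : ℚ) / (D : ℚ) ^ k,
                  Int.fract (((D : ℚ) ^ k - (j₄ : ℚ)) / (D : ℚ) ^ k),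
                  (j₄ : ℚ) / (D : ℚ) ^ k, (j₄ : ℚ) / (D : ℚ) ^ k]} ∧
      Nat.card S = D ^ (k + 1) := by
  have hD₀ : D ≠ 0 := by omega
  have hk₀ : k ≠ 0 := by omega
  change M = counterexampleMatrix D k at hM
  subst hM
  have hSeq : S = fundamentalDomainPoints D k :=
    hS.trans (setOf_mem_fundamentalDomain_counterexampleMatrix hD₀ hk₀)
  exact ⟨det_counterexampleMatrix, lcm_den_of_forall_sum_mul_counterexampleMatrix_eq_one hD₀ he,
    fun P Q d hP hQ h hd => natAbs_invariantFactor_counterexampleMatrix hk₀ hP hQ h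
      fun i => hd i 3 i.le_last,
    hSeq, hSeq ▸ card_fundamentalDomainPoints hD₀ hk₀⟩
end

section
/- With M the 4×4 matrix having rows (D,D,D,D), (0,1,1,0), (0,0,1,−1), (0,0,0,D^k) (D ≥ 2, k ≥ 2), the lattice point u = (D+1, 1, 0, 1) = ((D^{k−1}−1)/D^k)V_1 + ((D^k−1)/D^k)V_2 + (1/D^k)V_3 + (1/D^k)V_4 has weight 1 + 1/D, and for any prime p with p ≡ 1 + D^{k−1} (mod D^k), the weight of the p-multiple {pu} (computed coordinatewise on the fractional parts of the barycentric coefficients) is at least 1 + {p/D^k} > 1 + 1/D; hence the weight function is not stable under the p-action even though p ≡ 1 (mod D). -/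
/-!
Write `Q = D ^ k` and `A = D ^ (k - 1)`, so that `A / Q = 1 / D` and `p ≡ 1 + A (mod Q)`. The
coefficients of `u` are `(A - 1) / Q, (Q - 1) / Q, 1 / Q, 1 / Q`, and `{p n / Q} = (p n mod Q) / Q`.
Since `Q ∣ A ^ 2` (this needs `k ≥ 2`), the numerators become `Q - 1, Q - 1 - A, 1 + A, 1 + A`,
so the weight jumps from `1 + A / Q` to `2 + A / Q`.
-/

open Matrix

section BaryCoords

variable {K : Type*} [Field K]

def baryCoords (A Q : K) : Fin 4 → K :=
  ![(A - 1) / Q, (Q - 1) / Q, 1 / Q, 1 / Q]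

theorem mulVec_baryCoords {D A Q : K} (hAD : A * D = Q) (hQ : Q ≠ 0) :
    !![D, D, D, D; 0, 1, 1, 0; 0, 0, 1, -1; 0, 0, 0, Q] *ᵥ baryCoords A Q = ![D + 1, 1, 0, 1] := by
  ext i
  fin_cases i <;> simp [baryCoords, Fin.sum_univ_four, mulVec, dotProduct] <;> field_simp
  · linear_combination hAD
  · ring

theorem sum_baryCoords {A Q : K} (hQ : Q ≠ 0) : ∑ i, baryCoords A Q i = 1 + A / Q := by
  simp only [baryCoords, Fin.sum_univ_four, Matrix.cons_val]
  field_simp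
  ring

end BaryCoords

section FractionalParts

variable {K : Type*} [Field K] [LinearOrder K] [IsStrictOrderedRing K] [FloorRing K]

theorem Int.fract_intCast_div_of_modEq {n c Q : ℤ} (h : n ≡ c [ZMOD Q]) (hc : 0 ≤ c)
    (hcQ : c < Q) : Int.fract ((n : K) / Q) = c / Q := by
  have hQ : (0 : K) < Q := by exact_mod_cast hc.trans_lt hcQ
  obtain ⟨z, hz⟩ := Int.modEq_iff_dvd.mp h.symm
  refine Int.fract_eq_iff.mpr ⟨by positivity, (div_lt_one hQ).mpr (by exact_mod_cast hcQ), z, ?_⟩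
  rw [← sub_div, ← Int.cast_sub, hz]
  push_cast
  field_simp

variable {A Q p : ℤ}

theorem fract_mul_sub_one_div (hp : p ≡ 1 + A [ZMOD Q]) (hAA : Q ∣ A * A) (hQ : 0 < Q) :
    Int.fract ((p : K) * ((A - 1) / Q)) = (Q - 1) / Q := by
  have h : p * (A - 1) ≡ Q - 1 [ZMOD Q] :=
    (hp.mul_right _).trans <| Int.modEq_iff_dvd.mpr <| by
      rw [show Q - 1 - (1 + A) * (A - 1) = Q - A * A by ring]
      exact dvd_sub dvd_rfl hAA
  rw [mul_div_assoc', ← Int.cast_one, ← Int.cast_sub, ← Int.cast_mul,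
    Int.fract_intCast_div_of_modEq h (by omega) (by omega)]
  push_cast; rfl

theorem fract_mul_one_sub_div (hp : p ≡ 1 + A [ZMOD Q]) (hA : 0 ≤ A) (hAQ : 1 + A < Q) :
    Int.fract ((p : K) * ((Q - 1) / Q)) = (Q - 1 - A) / Q := by
  have h : p * (Q - 1) ≡ Q - 1 - A [ZMOD Q] :=
    (hp.mul_right _).trans <| Int.modEq_iff_dvd.mpr ⟨-A, by ring⟩
  rw [mul_div_assoc', ← Int.cast_one, ← Int.cast_sub, ← Int.cast_mul,
    Int.fract_intCast_div_of_modEq h (by omega) (by omega)]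
  push_cast; rfl

theorem fract_div_of_modEq (hp : p ≡ 1 + A [ZMOD Q]) (hA : 0 ≤ A) (hAQ : 1 + A < Q) :
    Int.fract ((p : K) / Q) = (1 + A) / Q := by
  rw [Int.fract_intCast_div_of_modEq hp (by omega) hAQ]
  push_cast; rfl

theorem sum_fract_mul_baryCoords (hp : p ≡ 1 + A [ZMOD Q]) (hAA : Q ∣ A * A) (hA : 0 ≤ A)
    (hAQ : 1 + A < Q) : ∑ i, Int.fract ((p : K) * baryCoords (A : K) Q i) = 2 + A / Q := by
  have hQ : (Q : K) ≠ 0 := by exact_mod_cast (show Q ≠ 0 by omega)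
  simp only [baryCoords, Fin.sum_univ_four, Matrix.cons_val, mul_one_div]
  rw [fract_mul_sub_one_div hp hAA (by omega), fract_mul_one_sub_div hp hA hAQ,
    fract_div_of_modEq hp hA hAQ]
  field_simp
  ring

end FractionalParts

theorem pow_dvd_pow_pred_mul_self {R : Type*} [Monoid R] (x : R) {k : ℕ} (hk : 2 ≤ k) :
    x ^ k ∣ x ^ (k - 1) * x ^ (k - 1) := by
  rw [← pow_add]
  exact pow_dvd_pow x (by omega)

theorem one_add_pow_pred_lt_pow {D k : ℕ} (hD : 2 ≤ D) (hk : 2 ≤ k) :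
    1 + D ^ (k - 1) < D ^ k := by
  have h2 : 2 ≤ D ^ (k - 1) := hD.trans (Nat.le_self_pow (by omega) D)
  have hpow : D ^ k = D ^ (k - 1) * D := by rw [← pow_succ]; congr 1; omega
  nlinarith

theorem four_dim_counterexample_p_action_general (D k : ℕ) (hD : 2 ≤ D) (hk : 2 ≤ k)
    (M : Matrix (Fin 4) (Fin 4) ℤ)
    (hM : M = !![(D : ℤ), D, D, D; 0, 1, 1, 0; 0, 0, 1, -1; 0, 0, 0, (D : ℤ) ^ k])
    (r : Fin 4 → ℚ)
    (hr : r = ![((D : ℚ) ^ (k - 1) - 1) / (D : ℚ) ^ k, ((D : ℚ) ^ k - 1) / (D : ℚ) ^ k,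
      1 / (D : ℚ) ^ k, 1 / (D : ℚ) ^ k])
    (p : ℕ) (hpcong : ((D : ℤ) ^ k) ∣ ((p : ℤ) - (1 + (D : ℤ) ^ (k - 1)))) :
    (fun i => ∑ j, (M i j : ℚ) * r j) = ![(D : ℚ) + 1, 1, 0, 1] ∧
      ∑ i, r i = 1 + 1 / (D : ℚ) ∧
      ((D : ℤ) ∣ ((p : ℤ) - 1)) ∧
      Int.fract ((p : ℚ) / (D : ℚ) ^ k) > 1 / (D : ℚ) ∧
      ∑ i, Int.fract ((p : ℚ) * r i) ≥ 1 + Int.fract ((p : ℚ) / (D : ℚ) ^ k) ∧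
      ∑ i, Int.fract ((p : ℚ) * r i) ≠ ∑ i, r i := by
  obtain rfl : r = baryCoords ((D : ℚ) ^ (k - 1)) (D ^ k) := hr
  have hAD : (D : ℚ) ^ (k - 1) * D = D ^ k := pow_sub_one_mul (by omega) _
  have hQ : (D : ℚ) ^ k ≠ 0 := pow_ne_zero _ (by norm_cast; omega)
  have hAQ : (D : ℚ) ^ (k - 1) / D ^ k = 1 / D := by
    rw [← hAD]; field_simp
  have hp : (p : ℤ) ≡ 1 + (D : ℤ) ^ (k - 1) [ZMOD (D : ℤ) ^ k] :=
    (Int.modEq_iff_dvd.mpr hpcong).symm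
  have hlt : 1 + (D : ℤ) ^ (k - 1) < (D : ℤ) ^ k := by exact_mod_cast one_add_pow_pred_lt_pow hD hk
  have hfract := fract_div_of_modEq (K := ℚ) hp (by positivity) hlt
  have hfract_sum :=
    sum_fract_mul_baryCoords (K := ℚ) hp (pow_dvd_pow_pred_mul_self _ hk) (by positivity) hlt
  push_cast at hfract hfract_sum
  rw [hAQ] at hfract_sum
  have hweight := sum_baryCoords (A := (D : ℚ) ^ (k - 1)) hQ
  rw [hAQ] at hweight
  have hinvQ_pos : (0 : ℚ) < 1 / D ^ k := by positivity
  have hinvQ_le : 1 / (D : ℚ) ^ k ≤ 1 :=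
    div_le_one_of_le₀ (one_le_pow₀ (by norm_cast; omega)) (by positivity)
  refine ⟨?_, hweight, ?_, ?_, ?_, ?_⟩
  · rw [← mulVec_baryCoords hAD hQ, hM]
    ext i
    fin_cases i <;> simp [mulVec, dotProduct, Fin.sum_univ_four]
  · rw [show (p : ℤ) - 1 = (p - (1 + (D : ℤ) ^ (k - 1))) + (D : ℤ) ^ (k - 1) by ring]
    exact dvd_add ((dvd_pow_self _ (by omega)).trans hpcong) (dvd_pow_self _ (by omega))
  · rw [hfract, add_div, hAQ]
    linarith
  · rw [hfract_sum, hfract, add_div, hAQ]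
    linarith
  · rw [hfract_sum, hweight]
    norm_num

/-- For `D ≥ 2`, `k ≥ 2` and the 4×4 matrix `M` with rows `(D,D,D,D)`, `(0,1,1,0)`,
`(0,0,1,−1)`, `(0,0,0,D^k)`: the barycentric coefficient vector
`r = ((D^(k−1)−1)/D^k, (D^k−1)/D^k, 1/D^k, 1/D^k)` gives the lattice point
`u = Mr = (D+1, 1, 0, 1)` of weight `1 + 1/D`, and for any prime `p` with
`p ≡ 1 + D^(k−1) (mod D^k)` the weight of the `p`-multiple `{pr}` is at least
`1 + {p/D^k} > 1 + 1/D`; hence the weight function is not stable under the `p`-action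
even though `p ≡ 1 (mod D)`. -/
theorem four_dim_counterexample_p_action (D k : ℕ) (hD : 2 ≤ D) (hk : 2 ≤ k)
    (M : Matrix (Fin 4) (Fin 4) ℤ)
    (hM : M = !![(D : ℤ), D, D, D; 0, 1, 1, 0; 0, 0, 1, -1; 0, 0, 0, (D : ℤ) ^ k])
    (r : Fin 4 → ℚ)
    (hr : r = ![((D : ℚ) ^ (k - 1) - 1) / (D : ℚ) ^ k, ((D : ℚ) ^ k - 1) / (D : ℚ) ^ k,
      1 / (D : ℚ) ^ k, 1 / (D : ℚ) ^ k])
    (p : ℕ) (hp : p.Prime) (hpcong : ((D : ℤ) ^ k) ∣ ((p : ℤ) - (1 + (D : ℤ) ^ (k - 1)))) :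
    (fun i => ∑ j, (M i j : ℚ) * r j) = ![(D : ℚ) + 1, 1, 0, 1] ∧
      ∑ i, r i = 1 + 1 / (D : ℚ) ∧
      ((D : ℤ) ∣ ((p : ℤ) - 1)) ∧
      Int.fract ((p : ℚ) / (D : ℚ) ^ k) > 1 / (D : ℚ) ∧
      ∑ i, Int.fract ((p : ℚ) * r i) ≥ 1 + Int.fract ((p : ℚ) / (D : ℚ) ^ k) ∧
      ∑ i, Int.fract ((p : ℚ) * r i) ≠ ∑ i, r i :=
  four_dim_counterexample_p_action_general D k hD hk M hM r hr p hpcong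
end
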